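/- arXiv:2603.06483 — 2 statements merged into one kernel-verified Lean document; each statement's English description precedes it below -/
import Mathlib

section
/- Let N ≥ 3, let γ be a complex number with γ ∉ {−1, 0} and γ not a root of unity, and let A = {γ^i : −N ≤ i ≤ N} ∪ {γ + 1} ⊆ ℂ*. Then |A · A| ≤ 3|A|, and the number of triples (a₁, a₂, a₃) ∈ A³ with a₂a₃ − a₁ + 1 = 0 is at least 2N ≥ (|A| − 2)·(2N/(2N+2)), in particular at least |A| − 2. -/
open scoped Pointwise

open Classical in
/-- For `A = {γ^i : |i| ≤ N} ∪ {γ+1}` with `γ ∉ {−1,0}` not a root of unity, `A` has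
small multiplicative doubling yet the variety `X₂X₃ − X₁ + 1 = 0` meets `A³` in
at least `2N ≥ |A| − 2` points. -/
theorem stmt13 (N : ℕ) (hN : 3 ≤ N) (γ : ℂ) (hγ0 : γ ≠ 0) (hγ1 : γ ≠ -1)
    (hγru : ∀ n : ℕ, 0 < n → γ ^ n ≠ 1)
    (A : Finset ℂ)
    (hA : A = ((Finset.Icc (-(N : ℤ)) (N : ℤ)).image (fun i => γ ^ i)) ∪ {γ + 1}) :
    (A * A).card ≤ 3 * A.card ∧
      2 * N ≤ ((A ×ˢ A ×ˢ A).filter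
        (fun t => t.2.1 * t.2.2 - t.1 + 1 = 0)).card ∧
      A.card - 2 ≤ ((A ×ˢ A ×ˢ A).filter
        (fun t => t.2.1 * t.2.2 - t.1 + 1 = 0)).card := by
  -- γ^k = 1 forces k = 0
  have hk0 : ∀ k : ℤ, γ ^ k = 1 → k = 0 := by
    intro k hkeq
    by_contra hne
    rcases lt_or_gt_of_ne hne with h | h
    · have h2 : γ ^ (-k) = 1 := by rw [zpow_neg, hkeq, inv_one]
      have h3 : γ ^ ((-k).toNat) = 1 := by
        rw [← zpow_natCast, Int.toNat_of_nonneg (by omega)]; exact h2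
      exact hγru _ (by omega) h3
    · have h3 : γ ^ (k.toNat) = 1 := by
        rw [← zpow_natCast, Int.toNat_of_nonneg (by omega)]; exact hkeq
      exact hγru _ (by omega) h3
  have hinj : Function.Injective (fun i : ℤ => γ ^ i) := by
    intro i j hij
    simp only at hij
    have h1 : γ ^ (i - j) = 1 := by
      rw [zpow_sub₀ hγ0, hij, div_self (zpow_ne_zero _ hγ0)]
    have := hk0 _ h1
    omega
  -- cardinality bounds on A
  have hIccN : (Finset.Icc (-(N : ℤ)) (N : ℤ)).card = 2 * N + 1 := by
    rw [Int.card_Icc]; omega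
  have hAge : 2 * N + 1 ≤ A.card := by
    have hsub : ((Finset.Icc (-(N : ℤ)) (N : ℤ)).image (fun i => γ ^ i)) ⊆ A := by
      rw [hA]; exact Finset.subset_union_left
    calc 2 * N + 1 = ((Finset.Icc (-(N : ℤ)) (N : ℤ)).image (fun i => γ ^ i)).card := by
          rw [Finset.card_image_of_injective _ hinj, hIccN]
      _ ≤ A.card := Finset.card_le_card hsub
  have hAle : A.card ≤ 2 * N + 2 := by
    rw [hA]
    calc (((Finset.Icc (-(N : ℤ)) (N : ℤ)).image (fun i => γ ^ i)) ∪ {γ + 1}).card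
        ≤ ((Finset.Icc (-(N : ℤ)) (N : ℤ)).image (fun i => γ ^ i)).card + ({γ + 1} : Finset ℂ).card :=
          Finset.card_union_le _ _
      _ ≤ (2 * N + 1) + 1 := by
          gcongr
          · calc ((Finset.Icc (-(N : ℤ)) (N : ℤ)).image (fun i => γ ^ i)).card
                ≤ (Finset.Icc (-(N : ℤ)) (N : ℤ)).card := Finset.card_image_le
              _ = 2 * N + 1 := hIccN
          · simp
      _ = 2 * N + 2 := by ring
  -- part 1: doubling bound
  have part1 : (A * A).card ≤ 3 * A.card := by
    set B := ((Finset.Icc (-(2 * N : ℤ)) (2 * N : ℤ)).image (fun i => γ ^ i)) ∪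
        ((Finset.Icc (-(N : ℤ)) (N : ℤ)).image (fun i => (γ + 1) * γ ^ i)) ∪
        {(γ + 1) * (γ + 1)} with hB
    have hsub : A * A ⊆ B := by
      intro x hx
      obtain ⟨a, ha, b, hb, hab⟩ := Finset.mem_mul.1 hx
      rw [hA] at ha hb
      simp only [Finset.mem_union, Finset.mem_image, Finset.mem_singleton,
        Finset.mem_Icc] at ha hb
      rw [hB]
      simp only [Finset.mem_union, Finset.mem_image, Finset.mem_singleton, Finset.mem_Icc]
      rcases ha with ⟨i, hi, rfl⟩ | rfl
      · rcases hb with ⟨j, hj, rfl⟩ | rfl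
        · exact Or.inl (Or.inl ⟨i + j, by omega, by rw [zpow_add₀ hγ0, hab]⟩)
        · exact Or.inl (Or.inr ⟨i, hi, by rw [← hab]; ring⟩)
      · rcases hb with ⟨j, hj, rfl⟩ | rfl
        · exact Or.inl (Or.inr ⟨j, hj, hab⟩)
        · exact Or.inr hab.symm
    have hBcard : B.card ≤ 6 * N + 3 := by
      rw [hB]
      calc (((Finset.Icc (-(2 * N : ℤ)) (2 * N : ℤ)).image (fun i => γ ^ i)) ∪
          ((Finset.Icc (-(N : ℤ)) (N : ℤ)).image (fun i => (γ + 1) * γ ^ i)) ∪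
          {(γ + 1) * (γ + 1)}).card
          ≤ (((Finset.Icc (-(2 * N : ℤ)) (2 * N : ℤ)).image (fun i => γ ^ i)) ∪
            ((Finset.Icc (-(N : ℤ)) (N : ℤ)).image (fun i => (γ + 1) * γ ^ i))).card
            + ({(γ + 1) * (γ + 1)} : Finset ℂ).card := Finset.card_union_le _ _
        _ ≤ (((Finset.Icc (-(2 * N : ℤ)) (2 * N : ℤ)).image (fun i => γ ^ i)).card
            + ((Finset.Icc (-(N : ℤ)) (N : ℤ)).image (fun i => (γ + 1) * γ ^ i)).card) + 1 := by
            gcongr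
            · exact Finset.card_union_le _ _
            · simp
        _ ≤ ((4 * N + 1) + (2 * N + 1)) + 1 := by
            gcongr
            · calc _ ≤ (Finset.Icc (-(2 * N : ℤ)) (2 * N : ℤ)).card := Finset.card_image_le
                _ = 4 * N + 1 := by rw [Int.card_Icc]; omega
            · calc _ ≤ (Finset.Icc (-(N : ℤ)) (N : ℤ)).card := Finset.card_image_le
                _ = 2 * N + 1 := hIccN
        _ = 6 * N + 3 := by ring
    calc (A * A).card ≤ B.card := Finset.card_le_card hsub
      _ ≤ 6 * N + 3 := hBcard
      _ ≤ 3 * (2 * N + 1) := by ring_nf; omega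
      _ ≤ 3 * A.card := by omega
  -- part 2: many solutions
  have part2 : 2 * N ≤ ((A ×ˢ A ×ˢ A).filter
      (fun t => t.2.1 * t.2.2 - t.1 + 1 = 0)).card := by
    have hmem : ∀ i : ℤ, -(N : ℤ) ≤ i → i ≤ N → γ ^ i ∈ A := by
      intro i h1 h2
      rw [hA]
      exact Finset.mem_union_left _ (Finset.mem_image.2 ⟨i, Finset.mem_Icc.2 ⟨h1, h2⟩, rfl⟩)
    have hmemγ1 : γ + 1 ∈ A := by
      rw [hA]; exact Finset.mem_union_right _ (Finset.mem_singleton_self _)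
    have := Finset.card_le_card_of_injOn
      (f := fun i : ℤ => ((γ + 1 : ℂ), γ ^ i, γ ^ (1 - i)))
      (s := Finset.Icc (1 - (N : ℤ)) (N : ℤ))
      (t := (A ×ˢ A ×ˢ A).filter (fun t => t.2.1 * t.2.2 - t.1 + 1 = 0))
      (by
        intro i hi
        rw [Finset.mem_coe, Finset.mem_Icc] at hi; rw [Finset.mem_coe]
        refine Finset.mem_filter.2 ⟨?_, ?_⟩
        · refine Finset.mem_product.2 ⟨hmemγ1, Finset.mem_product.2 ⟨?_, ?_⟩⟩
          · exact hmem i (by omega) (by omega)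
          · exact hmem (1 - i) (by omega) (by omega)
        · show γ ^ i * γ ^ (1 - i) - (γ + 1) + 1 = 0
          rw [← zpow_add₀ hγ0, show i + (1 - i) = 1 by ring, zpow_one]
          ring)
      (by
        intro i _ j _ hij
        simp only [Prod.mk.injEq] at hij
        exact hinj hij.2.1)
    calc 2 * N = (Finset.Icc (1 - (N : ℤ)) (N : ℤ)).card := by rw [Int.card_Icc]; omega
      _ ≤ _ := this
  exact ⟨part1, part2, by omega⟩
end

section
/- Let f : ℂ → ℂ be an entire function and a₁,…,a_{k−1} ∈ ℂ*, c₁,…,c_{k−1} ∈ ℂ with k ≥ 2. Suppose g₀, g₁, …, g_{k−1} : ℂ → ℂ are holomorphic on a connected open set U and satisfy g₀(z) + a₁g₁(a₁z + c₁) + ⋯ + a_{k−1}g_{k−1}(a_{k−1}z + c_{k−1}) = 0 for all z ∈ U, where these identities hold for all values of c₁,…,c_{k−2} ranging in fixed open sets (the functions g_i being derivatives of fixed holomorphic functions f_i). Then, fixing z and c₁,…,c_{k−2}, the function g_{k−1} is constant on the open set traced by a_{k−1}z + c_{k−1}; in particular if the identity holds for (z, c₁,…,c_{k−1}) in a product of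 open sets Ũ, then g_{k−1} is constant on an open set and hence, being holomorphic on a connected domain, g_{k−1} is constant there and f_{k−1} is affine linear. -/
/-- Concluding analytic step: if holomorphic functions `g₀,…,g_k` on a connected open set
`V`, with `g_i = f_i'`, satisfy `g₀(z) + ∑ aᵢ gᵢ(aᵢ z + cᵢ) = 0` for all `(z, c₁,…,c_k)`
in a product of non-empty open sets, then the last `g` is constant on `V` and the
corresponding `f` is affine linear on `V`. -/
theorem stmt19 (k : ℕ) (hk : 1 ≤ k)
    (a : Fin k → ℂ) (ha : ∀ i, a i ≠ 0)
    (Uz : Set ℂ) (hUz : IsOpen Uz) (hUzne : Uz.Nonempty)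
    (Uc : Fin k → Set ℂ) (hUc : ∀ i, IsOpen (Uc i)) (hUcne : ∀ i, (Uc i).Nonempty)
    (V : Set ℂ) (hV : IsOpen V) (hVconn : IsPreconnected V)
    (f g : Fin (k + 1) → ℂ → ℂ)
    (hg : ∀ i, DifferentiableOn ℂ (g i) V)
    (hfg : ∀ i, ∀ w ∈ V, HasDerivAt (f i) (g i w) w)
    (hUzV : Uz ⊆ V)
    (htrace : ∀ (i : Fin k), ∀ z ∈ Uz, ∀ c ∈ Uc i, a i * z + c ∈ V)
    (hrel : ∀ z ∈ Uz, ∀ c : Fin k → ℂ, (∀ i, c i ∈ Uc i) →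
      g 0 z + ∑ i : Fin k, a i * g i.succ (a i * z + c i) = 0) :
    (∃ d : ℂ, ∀ w ∈ V, g (Fin.last k) w = d) ∧
      (∃ α β : ℂ, ∀ w ∈ V, f (Fin.last k) w = α * w + β) := by
  obtain ⟨z₀, hz₀⟩ := hUzne
  set j : Fin k := ⟨k - 1, by omega⟩ with hj
  have hjsucc : j.succ = Fin.last k := by ext; simp [hj, Fin.last]; omega
  choose c₀ hc₀ using hUcne
  set d : ℂ := g (Fin.last k) (a j * z₀ + c₀ j) with hd
  -- the key local constancy
  have key : ∀ c ∈ Uc j, g (Fin.last k) (a j * z₀ + c) = d := by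
    intro c hc
    have h1 := hrel z₀ hz₀ c₀ hc₀
    have h2 := hrel z₀ hz₀ (Function.update c₀ j c) (by
      intro i
      rcases eq_or_ne i j with rfl | hij
      · simpa using hc
      · simpa [Function.update_of_ne hij] using hc₀ i)
    rw [Fintype.sum_eq_add_sum_compl j] at h1 h2
    have hcompl : ∑ i ∈ {j}ᶜ, a i * g i.succ (a i * z₀ + Function.update c₀ j c i)
        = ∑ i ∈ {j}ᶜ, a i * g i.succ (a i * z₀ + c₀ i) := by
      refine Finset.sum_congr rfl fun i hi => ?_
      have hij : i ≠ j := by simpa using hi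
      rw [Function.update_of_ne hij]
    rw [Function.update_self, hcompl] at h2
    have := mul_left_cancel₀ (ha j) (by linear_combination h2 - h1 :
      a j * g j.succ (a j * z₀ + c) = a j * g j.succ (a j * z₀ + c₀ j))
    rwa [hjsucc] at this
  -- open set where g last is constant
  set T : Set ℂ := (fun w => w - a j * z₀) ⁻¹' Uc j with hT
  have hTopen : IsOpen T := (hUc j).preimage (by fun_prop)
  have hTg : ∀ w ∈ T, g (Fin.last k) w = d := by
    intro w hw
    have := key (w - a j * z₀) hw
    simpa [add_sub_cancel] using this
  have hw₀T : a j * z₀ + c₀ j ∈ T := by simp [hT, hc₀ j]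
  have hw₀V : a j * z₀ + c₀ j ∈ V := htrace j z₀ hz₀ (c₀ j) (hc₀ j)
  -- identity theorem for g
  have hgan : AnalyticOnNhd ℂ (g (Fin.last k)) V := (hg (Fin.last k)).analyticOnNhd hV
  have hev : g (Fin.last k) =ᶠ[nhds (a j * z₀ + c₀ j)] fun _ => d := by
    filter_upwards [hTopen.mem_nhds hw₀T] with w hw using hTg w hw
  have hgconst : ∀ w ∈ V, g (Fin.last k) w = d := fun w hw =>
    hgan.eqOn_of_preconnected_of_eventuallyEq analyticOnNhd_const hVconn hw₀V hev hw
  refine ⟨⟨d, hgconst⟩, ?_⟩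
  -- f part
  set F : ℂ → ℂ := fun w => f (Fin.last k) w - d * w with hF
  have hFder : ∀ w ∈ V, HasDerivAt F 0 w := by
    intro w hw
    have h := (hfg (Fin.last k) w hw).sub ((hasDerivAt_id w).const_mul d)
    rw [hgconst w hw] at h
    rw [show (0:ℂ) = d - d * 1 by ring]; exact h
  have hFdiff : DifferentiableOn ℂ F V := fun w hw =>
    (hFder w hw).differentiableAt.differentiableWithinAt
  have hFan : AnalyticOnNhd ℂ F V := hFdiff.analyticOnNhd hV
  have hz₀V : z₀ ∈ V := hUzV hz₀
  obtain ⟨ε, hε, hball⟩ := Metric.isOpen_iff.1 hV z₀ hz₀V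
  have hballconst : ∀ x ∈ Metric.ball z₀ ε, F x = F z₀ := by
    intro x hx
    refine (convex_ball z₀ ε).is_const_of_fderivWithin_eq_zero
      (hFdiff.mono hball) (fun y hy => ?_) hx (Metric.mem_ball_self hε)
    rw [fderivWithin_of_isOpen Metric.isOpen_ball hy]
    have := (hFder y (hball hy)).hasFDerivAt.fderiv
    rw [this]; ext; simp
  have hevF : F =ᶠ[nhds z₀] fun _ => F z₀ := by
    filter_upwards [Metric.isOpen_ball.mem_nhds (Metric.mem_ball_self hε)] with x hx
      using hballconst x hx
  have hFconst : ∀ w ∈ V, F w = F z₀ := fun w hw =>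
    hFan.eqOn_of_preconnected_of_eventuallyEq analyticOnNhd_const hVconn hz₀V hevF hw
  refine ⟨d, F z₀, fun w hw => ?_⟩
  have := hFconst w hw
  simp only [hF] at this
  linear_combination this
end
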